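/- Suppose A, B, A', B' are discrete random variables with I(A'; B | A) = 0 (a causality/anticipation-free condition). Then the channel excess entropy decomposes as I((A,B); B' | A') = I((A,B);(A',B')) - I(A;A'). -/

import Mathlib

open Real BigOperators

/-- Probability that the random variable `X` takes the value `x`,
under the weight function `μ` on a finite sample space `Ω`. -/
noncomputable def pr {Ω α : Type*} [Fintype Ω] [DecidableEq α]
    (μ : Ω → ℝ) (X : Ω → α) (x : α) : ℝ :=
  ∑ ω, if X ω = x then μ ω else 0

/-- Shannon entropy of the random variable `X`. -/
noncomputable def ent {Ω α : Type*} [Fintype Ω] [Fintype α] [DecidableEq α]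
    (μ : Ω → ℝ) (X : Ω → α) : ℝ :=
  ∑ x, Real.negMulLog (pr μ X x)

/-- Mutual information `I(X;Y) = H(X) + H(Y) - H(X,Y)`. -/
noncomputable def mi {Ω α β : Type*} [Fintype Ω]
    [Fintype α] [Fintype β] [DecidableEq α] [DecidableEq β]
    (μ : Ω → ℝ) (X : Ω → α) (Y : Ω → β) : ℝ :=
  ent μ X + ent μ Y - ent μ (fun ω => (X ω, Y ω))

/-- Conditional mutual information `I(X;Z|W) = H(X,W) + H(Z,W) - H(X,Z,W) - H(W)`. -/
noncomputable def condMI {Ω α β γ : Type*} [Fintype Ω]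
    [Fintype α] [Fintype β] [Fintype γ]
    [DecidableEq α] [DecidableEq β] [DecidableEq γ]
    (μ : Ω → ℝ) (X : Ω → α) (Z : Ω → β) (W : Ω → γ) : ℝ :=
  ent μ (fun ω => (X ω, W ω)) + ent μ (fun ω => (Z ω, W ω))
    - ent μ (fun ω => (X ω, Z ω, W ω)) - ent μ W

/-!
Both sides are signed combinations of joint entropies, and joint entropy is invariant under an
injective relabelling of values, in particular under reordering the components of a tuple. Once
entropies differing only by such a reordering are identified, the difference of the two sides
is exactly `-I(A';B|A)`.
-/

section Relabel

variable {Ω α β : Type*} [Fintype Ω] [DecidableEq β]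

lemma pr_comp_apply_of_injective [DecidableEq α] (μ : Ω → ℝ) (X : Ω → α) {e : α → β}
    (he : Function.Injective e) (x : α) :
    pr μ (fun ω => e (X ω)) (e x) = pr μ X x := by
  simp only [pr, he.eq_iff]

lemma pr_comp_eq_zero_of_notMem_range (μ : Ω → ℝ) (X : Ω → α) {e : α → β} {y : β}
    (hy : y ∉ Set.range e) :
    pr μ (fun ω => e (X ω)) y = 0 :=
  Finset.sum_eq_zero fun ω _ => if_neg fun h => hy ⟨X ω, h⟩

lemma ent_comp_of_injective [Fintype α] [Fintype β] [DecidableEq α] (μ : Ω → ℝ)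
    (X : Ω → α) {e : α → β} (he : Function.Injective e) :
    ent μ (fun ω => e (X ω)) = ent μ X :=
  (Fintype.sum_of_injective e he _ _
    (fun y hy => by rw [pr_comp_eq_zero_of_notMem_range μ X hy, negMulLog_zero])
    (fun x => by rw [pr_comp_apply_of_injective μ X he])).symm

lemma ent_prod_comm [Fintype α] [Fintype β] [DecidableEq α] (μ : Ω → ℝ)
    (X : Ω → α) (Y : Ω → β) :
    ent μ (fun ω => (X ω, Y ω)) = ent μ (fun ω => (Y ω, X ω)) :=
  (ent_comp_of_injective μ _ Prod.swap_injective).symm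

end Relabel

theorem channel_excess_entropy_decomposition_general
    {Ω α β α' β' : Type*} [Fintype Ω]
    [Fintype α] [Fintype β] [Fintype α'] [Fintype β']
    [DecidableEq α] [DecidableEq β] [DecidableEq α'] [DecidableEq β']
    (μ : Ω → ℝ)
    (A : Ω → α) (B : Ω → β) (A' : Ω → α') (B' : Ω → β')
    (hCausal : condMI μ A' B A = 0) :
    condMI μ (fun ω => (A ω, B ω)) B' A'
      = mi μ (fun ω => (A ω, B ω)) (fun ω => (A' ω, B' ω)) - mi μ A A' := by
  have hABA' : ent μ (fun ω => ((A ω, B ω), A' ω)) = ent μ (fun ω => (A' ω, B ω, A ω)) :=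
    ent_comp_of_injective μ (fun ω => (A' ω, B ω, A ω))
      (e := fun p => ((p.2.2, p.2.1), p.1)) fun _ _ h => by simp_all [Prod.ext_iff]
  have hABB'A' : ent μ (fun ω => ((A ω, B ω), B' ω, A' ω))
      = ent μ (fun ω => ((A ω, B ω), A' ω, B' ω)) :=
    ent_comp_of_injective μ (fun ω => ((A ω, B ω), A' ω, B' ω))
      (e := fun p => (p.1, p.2.2, p.2.1)) fun _ _ h => by simp_all [Prod.ext_iff]
  have hB'A' := ent_prod_comm μ B' A'
  have hAB := ent_prod_comm μ A B
  have hAA' := ent_prod_comm μ A A'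
  unfold condMI mi at *
  linarith

/-- For a causal (anticipation-free) channel, i.e. when `I(A';B|A) = 0`,
the channel excess entropy decomposes as
`I((A,B); B' | A') = I((A,B);(A',B')) - I(A;A')`. -/
theorem channel_excess_entropy_decomposition
    {Ω α β α' β' : Type*} [Fintype Ω]
    [Fintype α] [Fintype β] [Fintype α'] [Fintype β']
    [DecidableEq α] [DecidableEq β] [DecidableEq α'] [DecidableEq β']
    (μ : Ω → ℝ) (hμ : ∀ ω, 0 ≤ μ ω) (hsum : ∑ ω, μ ω = 1)
    (A : Ω → α) (B : Ω → β) (A' : Ω → α') (B' : Ω → β')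
    (hCausal : condMI μ A' B A = 0) :
    condMI μ (fun ω => (A ω, B ω)) B' A'
      = mi μ (fun ω => (A ω, B ω)) (fun ω => (A' ω, B' ω)) - mi μ A A' :=
  channel_excess_entropy_decomposition_general μ A B A' B' hCausal
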